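/- arXiv:math/0607026 — 5 statements merged into one kernel-verified Lean document; each statement's English description precedes it below -/
import Mathlib

section
/- Let f1, f2, f3 : [-π, π] → ℝ be measurable functions with 0 < c ≤ f_i(θ) ≤ C almost everywhere for some constants c, C (i = 1, 2, 3). Then the function τ ↦ δ_{a/g}(f1, f2^{1−τ} f3^{τ}) is convex on [0, 1]. -/
/-!
With `a = log f1 - log f2` and `b = log f2 - log f3` one has `f1 / (f2^(1-τ) f3^τ) = exp (a + τ b)`,
so with respect to the normalized measure `dθ / 2π` on `[-π, π]` the function in question is
`τ ↦ log ∫ exp (a + τ b) - ∫ (a + τ b)`. The second term is affine in `τ`; the first is convex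
because `exp (a + (p x + q y) b) = exp (a + x b) ^ p * exp (a + y b) ^ q` and Hölder's inequality
with exponents `1/p`, `1/q` bounds its integral by `(∫ exp (a + x b)) ^ p * (∫ exp (a + y b)) ^ q`.
-/

open MeasureTheory Real Set

/-- `δ_{a/g}(f1, f2)`: the logarithm of the ratio of the arithmetic mean over the
geometric mean of `f1/f2` on `[-π, π]` (w.r.t. normalized Lebesgue measure `dθ/2π`). -/
noncomputable def deltaAG (f1 f2 : ℝ → ℝ) : ℝ :=
  Real.log ((2 * π)⁻¹ * ∫ θ in Icc (-π) π, f1 θ / f2 θ) -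
    (2 * π)⁻¹ * ∫ θ in Icc (-π) π, Real.log (f1 θ / f2 θ)

section LogIntegralExp

variable {α : Type*} [MeasurableSpace α] {μ : Measure α}

theorem integral_rpow_mul_rpow_le {f g : α → ℝ} (hf_nonneg : 0 ≤ᵐ[μ] f)
    (hg_nonneg : 0 ≤ᵐ[μ] g) (hf : Integrable f μ) (hg : Integrable g μ) {p q : ℝ}
    (hp : 0 ≤ p) (hq : 0 ≤ q) (hpq : p + q = 1) :
    ∫ x, f x ^ p * g x ^ q ∂μ ≤ (∫ x, f x ∂μ) ^ p * (∫ x, g x ∂μ) ^ q := by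
  have hfg_nonneg : 0 ≤ᵐ[μ] fun x => f x ^ p * g x ^ q := by
    filter_upwards [hf_nonneg, hg_nonneg] with x hfx hgx
    exact mul_nonneg (rpow_nonneg hfx p) (rpow_nonneg hgx q)
  have hfg_meas : AEStronglyMeasurable (fun x => f x ^ p * g x ^ q) μ :=
    ((hf.aemeasurable.pow_const p).mul (hg.aemeasurable.pow_const q)).aestronglyMeasurable
  have hf_ne_top := (lintegral_ofReal_ne_top_iff_integrable hf.1 hf_nonneg).2 hf
  have hg_ne_top := (lintegral_ofReal_ne_top_iff_integrable hg.1 hg_nonneg).2 hg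
  rw [integral_eq_lintegral_of_nonneg_ae hf_nonneg hf.1,
    integral_eq_lintegral_of_nonneg_ae hg_nonneg hg.1,
    integral_eq_lintegral_of_nonneg_ae hfg_nonneg hfg_meas,
    ENNReal.toReal_rpow, ENNReal.toReal_rpow, ← ENNReal.toReal_mul]
  refine ENNReal.toReal_mono (ENNReal.mul_ne_top (ENNReal.rpow_ne_top_of_nonneg hp hf_ne_top)
    (ENNReal.rpow_ne_top_of_nonneg hq hg_ne_top)) ?_
  calc ∫⁻ x, ENNReal.ofReal (f x ^ p * g x ^ q) ∂μ
      = ∫⁻ x, ENNReal.ofReal (f x) ^ p * ENNReal.ofReal (g x) ^ q ∂μ := by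
        refine lintegral_congr_ae ?_
        filter_upwards [hf_nonneg, hg_nonneg] with x hfx hgx
        rw [ENNReal.ofReal_mul (rpow_nonneg hfx p), ENNReal.ofReal_rpow_of_nonneg hfx hp,
          ENNReal.ofReal_rpow_of_nonneg hgx hq]
    _ ≤ _ := ENNReal.lintegral_mul_norm_pow_le hf.aemeasurable.ennreal_ofReal
        hg.aemeasurable.ennreal_ofReal hp hq hpq

theorem convexOn_log_integral_exp_add_mul [NeZero μ] {s : Set ℝ} (hs : Convex ℝ s)
    {a b : α → ℝ} (hint : ∀ τ ∈ s, Integrable (fun x => exp (a x + τ * b x)) μ) :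
    ConvexOn ℝ s (fun τ => log (∫ x, exp (a x + τ * b x) ∂μ)) := by
  refine ⟨hs, fun x hx y hy p q hp hq hpq => ?_⟩
  have hsplit : (fun θ => exp (a θ + (p • x + q • y) * b θ))
      = fun θ => exp (a θ + x * b θ) ^ p * exp (a θ + y * b θ) ^ q := by
    funext θ
    rw [← exp_mul, ← exp_mul, ← exp_add, smul_eq_mul, smul_eq_mul]
    congr 1
    linear_combination (-a θ) * hpq
  have hIx := integral_exp_pos (hint x hx)
  have hIy := integral_exp_pos (hint y hy)
  have hI := integral_exp_pos (hint _ (hs hx hy hp hq hpq))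
  rw [hsplit] at hI
  calc log (∫ θ, exp (a θ + (p • x + q • y) * b θ) ∂μ)
      = log (∫ θ, exp (a θ + x * b θ) ^ p * exp (a θ + y * b θ) ^ q ∂μ) := by rw [hsplit]
    _ ≤ log ((∫ θ, exp (a θ + x * b θ) ∂μ) ^ p * (∫ θ, exp (a θ + y * b θ) ∂μ) ^ q) :=
        log_le_log hI (integral_rpow_mul_rpow_le (ae_of_all _ fun _ => (exp_pos _).le)
          (ae_of_all _ fun _ => (exp_pos _).le) (hint x hx) (hint y hy) hp hq hpq)
    _ = p • log (∫ θ, exp (a θ + x * b θ) ∂μ) + q • log (∫ θ, exp (a θ + y * b θ) ∂μ) := by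
        rw [log_mul (rpow_pos_of_pos hIx p).ne' (rpow_pos_of_pos hIy q).ne', log_rpow hIx,
          log_rpow hIy, smul_eq_mul, smul_eq_mul]

theorem integrable_exp_add_mul_of_abs_le [IsFiniteMeasure μ] {a b : α → ℝ}
    (ha : AEStronglyMeasurable a μ) (hb : AEStronglyMeasurable b μ) {K : ℝ}
    (haK : ∀ᵐ x ∂μ, |a x| ≤ K) (hbK : ∀ᵐ x ∂μ, |b x| ≤ K) (τ : ℝ) :
    Integrable (fun x => exp (a x + τ * b x)) μ := by
  refine .of_bound (continuous_exp.comp_aestronglyMeasurable (ha.add (hb.const_mul τ)))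
    (exp (K + |τ| * K)) ?_
  filter_upwards [haK, hbK] with x hax hbx
  rw [norm_of_nonneg (exp_pos _).le, exp_le_exp]
  calc a x + τ * b x ≤ |a x| + |τ| * |b x| :=
        add_le_add (le_abs_self _) ((le_abs_self _).trans (abs_mul _ _).le)
    _ ≤ K + |τ| * K := by gcongr

theorem convexOn_log_integral_exp_add_mul_sub_integral [IsFiniteMeasure μ] [NeZero μ]
    {a b : α → ℝ} (ha : AEStronglyMeasurable a μ) (hb : AEStronglyMeasurable b μ) {K : ℝ}
    (haK : ∀ᵐ x ∂μ, |a x| ≤ K) (hbK : ∀ᵐ x ∂μ, |b x| ≤ K) :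
    ConvexOn ℝ univ
      (fun τ => log (∫ x, exp (a x + τ * b x) ∂μ) - ∫ x, (a x + τ * b x) ∂μ) := by
  have hai : Integrable a μ := .of_bound ha K haK
  have hbi : Integrable b μ := .of_bound hb K hbK
  have hlin : ConcaveOn ℝ univ fun τ => ∫ x, (a x + τ * b x) ∂μ :=
    ((((LinearMap.id : ℝ →ₗ[ℝ] ℝ).smulRight (∫ x, b x ∂μ)).concaveOn convex_univ).add_const
      (∫ x, a x ∂μ)).congr fun τ _ => by
        simp [integral_add hai (hbi.const_mul τ), integral_const_mul, add_comm]
  exact (convexOn_log_integral_exp_add_mul convex_univ fun τ _ =>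
    integrable_exp_add_mul_of_abs_le ha hb haK hbK τ).sub hlin

end LogIntegralExp

open ProbabilityTheory

theorem deltaAG_eq_integral_cond (f1 f2 : ℝ → ℝ) :
    deltaAG f1 f2 = log (∫ θ, f1 θ / f2 θ ∂volume[|Icc (-π) π]) -
      ∫ θ, log (f1 θ / f2 θ) ∂volume[|Icc (-π) π] := by
  have h : (volume (Icc (-π) π))⁻¹.toReal = (2 * π)⁻¹ := by
    rw [Real.volume_Icc, ENNReal.toReal_inv, ENNReal.toReal_ofReal (by linarith [pi_pos])]
    ring
  simp only [deltaAG, ProbabilityTheory.cond, integral_smul_measure, h, smul_eq_mul]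

theorem div_rpow_mul_rpow_eq_exp {x y z : ℝ} (hx : 0 < x) (hy : 0 < y) (hz : 0 < z) (τ : ℝ) :
    x / (y ^ (1 - τ) * z ^ τ) = exp (log x - log y + τ * (log y - log z)) := by
  rw [rpow_def_of_pos hy, rpow_def_of_pos hz, ← exp_add, ← exp_log hx, ← exp_sub, log_exp]
  congr 1
  ring

theorem abs_log_sub_log_le {c C x y : ℝ} (hc : 0 < c) (hx : c ≤ x ∧ x ≤ C)
    (hy : c ≤ y ∧ y ≤ C) : |log x - log y| ≤ log C - log c := by
  have := log_le_log hc hx.1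
  have := log_le_log (hc.trans_le hx.1) hx.2
  have := log_le_log hc hy.1
  have := log_le_log (hc.trans_le hy.1) hy.2
  rw [abs_sub_le_iff]
  constructor <;> linarith

/-- `τ ↦ δ_{a/g}(f1, f2^{1-τ} f3^{τ})` is convex on `[0, 1]`. -/
theorem deltaAG_convexOn (f1 f2 f3 : ℝ → ℝ) (c C : ℝ) (hc : 0 < c)
    (hm1 : Measurable f1) (hm2 : Measurable f2) (hm3 : Measurable f3)
    (hf1 : ∀ᵐ θ ∂(volume.restrict (Icc (-π) π)), c ≤ f1 θ ∧ f1 θ ≤ C)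
    (hf2 : ∀ᵐ θ ∂(volume.restrict (Icc (-π) π)), c ≤ f2 θ ∧ f2 θ ≤ C)
    (hf3 : ∀ᵐ θ ∂(volume.restrict (Icc (-π) π)), c ≤ f3 θ ∧ f3 θ ≤ C) :
    ConvexOn ℝ (Icc (0 : ℝ) 1)
      (fun τ => deltaAG f1 (fun θ => f2 θ ^ (1 - τ) * f3 θ ^ τ)) := by
  set ν := volume[|Icc (-π) π]
  have : IsProbabilityMeasure ν :=
    cond_isProbabilityMeasure_of_finite (by simp [pi_pos]) (by simp)
  replace hf1 : ∀ᵐ θ ∂ν, c ≤ f1 θ ∧ f1 θ ≤ C := Measure.ae_smul_measure hf1 _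
  replace hf2 : ∀ᵐ θ ∂ν, c ≤ f2 θ ∧ f2 θ ≤ C := Measure.ae_smul_measure hf2 _
  replace hf3 : ∀ᵐ θ ∂ν, c ≤ f3 θ ∧ f3 θ ≤ C := Measure.ae_smul_measure hf3 _
  set a := fun θ => log (f1 θ) - log (f2 θ)
  set b := fun θ => log (f2 θ) - log (f3 θ)
  have hab : ∀ τ, ∀ᵐ θ ∂ν, f1 θ / (f2 θ ^ (1 - τ) * f3 θ ^ τ) = exp (a θ + τ * b θ) := by
    intro τ
    filter_upwards [hf1, hf2, hf3] with θ h1 h2 h3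
    exact div_rpow_mul_rpow_eq_exp (hc.trans_le h1.1) (hc.trans_le h2.1) (hc.trans_le h3.1) τ
  have hdelta : ∀ τ, deltaAG f1 (fun θ => f2 θ ^ (1 - τ) * f3 θ ^ τ) =
      log (∫ θ, exp (a θ + τ * b θ) ∂ν) - ∫ θ, (a θ + τ * b θ) ∂ν := fun τ => by
    rw [deltaAG_eq_integral_cond, integral_congr_ae (hab τ),
      integral_congr_ae ((hab τ).mono fun θ hθ => (congrArg log hθ).trans (log_exp _))]
  have hconv := convexOn_log_integral_exp_add_mul_sub_integral
    (hm1.log.sub hm2.log).aestronglyMeasurable (hm2.log.sub hm3.log).aestronglyMeasurable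
    (hf1.and hf2 |>.mono fun θ h => abs_log_sub_log_le hc h.1 h.2)
    (hf2.and hf3 |>.mono fun θ h => abs_log_sub_log_le hc h.1 h.2)
  exact (hconv.subset (subset_univ _) (convex_Icc 0 1)).congr fun τ _ => (hdelta τ).symm
end

section
/- Let f1, fb : [-π, π] → ℝ be measurable functions with 0 < c ≤ f1(θ), fb(θ) ≤ C almost everywhere for some constants c, C. Then the function τ ↦ δ_{a/g}(f1, f1^{1−τ} fb^{τ}) is monotonically increasing for τ ∈ [0, 1]. -/
open MeasureTheory Real Set

/-!
Let `ν` be the uniform probability measure on `[-π, π]`, `u = log (f1 / fb)` and `K` the cumulant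
generating function of `u` under `ν`. Since `f1 / (f1 ^ (1 - τ) * fb ^ τ) = exp (τ * u)`, the
quantity `δ_{a/g}` along the logarithmic interval is `K τ - τ * E[u]`. Jensen's inequality for `exp`
gives `τ * E[u] ≤ K τ`, and Jensen's inequality for `x ↦ x ^ (t / s)` gives `t * K s ≤ s * K t`
for `0 < s ≤ t`. Hence `s * (K t - t * E[u]) ≥ t * (K s - s * E[u]) ≥ s * (K s - s * E[u])`.
-/

namespace ProbabilityTheory

variable {Ω : Type*} [MeasurableSpace Ω] {μ : Measure Ω} {X : Ω → ℝ} {s t : ℝ}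

lemma integrableExpSet_eq_univ_of_ae_abs_le [IsFiniteMeasure μ] {K : ℝ} (hX : AEMeasurable X μ)
    (hK : ∀ᵐ ω ∂μ, |X ω| ≤ K) : integrableExpSet X μ = univ := by
  refine eq_univ_of_forall fun t ↦ ?_
  refine .of_bound (measurable_exp.comp_aemeasurable (hX.const_mul t)).aestronglyMeasurable
    (exp (|t| * K)) (hK.mono fun ω hω ↦ ?_)
  rw [norm_of_nonneg (exp_pos _).le, exp_le_exp]
  calc t * X ω ≤ |t * X ω| := le_abs_self _
    _ = |t| * |X ω| := abs_mul _ _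
    _ ≤ |t| * K := mul_le_mul_of_nonneg_left hω (abs_nonneg t)

variable [IsProbabilityMeasure μ]

lemma mul_integral_le_cgf (hX : Integrable X μ) (ht : Integrable (fun ω ↦ exp (t * X ω)) μ) :
    t * μ[X] ≤ cgf X μ t := by
  rw [← integral_const_mul, cgf, le_log_iff_exp_le (mgf_pos ht)]
  exact convexOn_exp.map_integral_le continuous_exp.continuousOn isClosed_univ
    (.of_forall fun _ ↦ mem_univ _) (hX.const_mul t) ht

lemma mgf_rpow_div_le (hs : 0 < s) (hst : s ≤ t) (hs_int : Integrable (fun ω ↦ exp (s * X ω)) μ)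
    (ht_int : Integrable (fun ω ↦ exp (t * X ω)) μ) :
    mgf X μ s ^ (t / s) ≤ mgf X μ t := by
  have hpow : ∀ ω, exp (s * X ω) ^ (t / s) = exp (t * X ω) := fun ω ↦ by
    rw [← exp_mul]
    congr 1
    field_simp
  have hp : 1 ≤ t / s := (one_le_div hs).2 hst
  refine (convexOn_rpow hp).map_integral_le
    (continuousOn_id.rpow_const fun _ _ ↦ Or.inr (zero_le_one.trans hp)) isClosed_Ici
    (.of_forall fun _ ↦ (exp_pos _).le) hs_int ?_ |>.trans_eq ?_
  · simpa [Function.comp_def, hpow] using ht_int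
  · simp only [hpow, mgf]

lemma mul_cgf_le_mul_cgf (hs : 0 < s) (hst : s ≤ t)
    (hs_int : Integrable (fun ω ↦ exp (s * X ω)) μ)
    (ht_int : Integrable (fun ω ↦ exp (t * X ω)) μ) :
    t * cgf X μ s ≤ s * cgf X μ t := by
  have h := log_le_log (rpow_pos_of_pos (mgf_pos hs_int) _) (mgf_rpow_div_le hs hst hs_int ht_int)
  rw [log_rpow (mgf_pos hs_int), div_mul_eq_mul_div, div_le_iff₀ hs] at h
  simpa only [cgf, mul_comm s] using h

theorem monotoneOn_cgf_sub_mul_integral (hX : Integrable X μ) :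
    MonotoneOn (fun t ↦ cgf X μ t - t * μ[X]) (Ici 0 ∩ integrableExpSet X μ) := by
  rintro s ⟨hs0, hs_int⟩ t ⟨-, ht_int⟩ hst
  have hgap_t := mul_integral_le_cgf hX ht_int
  rcases (mem_Ici.1 hs0).eq_or_lt with rfl | hs
  · simpa [cgf_zero] using hgap_t
  have hgap_s := mul_integral_le_cgf hX hs_int
  have hstar := mul_cgf_le_mul_cgf hs hst hs_int ht_int
  dsimp only
  nlinarith

end ProbabilityTheory

open ProbabilityTheory

lemma abs_log_div_le {c C x y : ℝ} (hc : 0 < c) (hx : c ≤ x ∧ x ≤ C) (hy : c ≤ y ∧ y ≤ C) :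
    |log (x / y)| ≤ log C - log c := by
  rw [log_div (hc.trans_le hx.1).ne' (hc.trans_le hy.1).ne', abs_sub_le_iff]
  have := log_le_log hc hx.1
  have := log_le_log hc hy.1
  have := log_le_log (hc.trans_le hx.1) hx.2
  have := log_le_log (hc.trans_le hy.1) hy.2
  constructor <;> linarith

lemma div_rpow_one_sub_mul_rpow {x y : ℝ} (hx : 0 < x) (hy : 0 < y) (τ : ℝ) :
    x / (x ^ (1 - τ) * y ^ τ) = exp (τ * log (x / y)) := by
  rw [rpow_sub hx, rpow_one, mul_comm τ, ← rpow_def_of_pos (div_pos hx hy), div_rpow hx.le hy.le]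
  field_simp

lemma integral_cond_Icc {a b : ℝ} (hab : a ≤ b) (f : ℝ → ℝ) :
    ∫ x, f x ∂volume[|Icc a b] = (b - a)⁻¹ * ∫ x in Icc a b, f x := by
  rw [ProbabilityTheory.cond, integral_smul_measure, Real.volume_Icc, ENNReal.toReal_inv,
    ENNReal.toReal_ofReal (sub_nonneg.2 hab), smul_eq_mul]

lemma deltaAG_eq_cgf_sub_mul_integral {f1 fb : ℝ → ℝ}
    (hpos : ∀ᵐ θ ∂volume.restrict (Icc (-π) π), 0 < f1 θ ∧ 0 < fb θ) (τ : ℝ) :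
    deltaAG f1 (fun θ ↦ f1 θ ^ (1 - τ) * fb θ ^ τ) =
      cgf (fun θ ↦ log (f1 θ / fb θ)) volume[|Icc (-π) π] τ -
        τ * ∫ θ, log (f1 θ / fb θ) ∂volume[|Icc (-π) π] := by
  have hratio := hpos.mono fun θ h ↦ div_rpow_one_sub_mul_rpow h.1 h.2 τ
  have hmean : ∫ θ in Icc (-π) π, f1 θ / (f1 θ ^ (1 - τ) * fb θ ^ τ) =
      ∫ θ in Icc (-π) π, exp (τ * log (f1 θ / fb θ)) :=
    integral_congr_ae hratio
  have hlog_mean : ∫ θ in Icc (-π) π, log (f1 θ / (f1 θ ^ (1 - τ) * fb θ ^ τ)) =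
      τ * ∫ θ in Icc (-π) π, log (f1 θ / fb θ) := by
    rw [← integral_const_mul]
    exact integral_congr_ae (hratio.mono fun θ h ↦ by simp only [h, log_exp])
  have h2π : π - -π = 2 * π := by ring
  simp only [deltaAG, cgf, mgf, integral_cond_Icc (neg_le_self pi_pos.le), h2π, hmean, hlog_mean]
  ring

/-- `τ ↦ δ_{a/g}(f1, f1^{1-τ} fb^{τ})` is monotonically increasing on `[0, 1]`. -/
theorem deltaAG_monotoneOn (f1 fb : ℝ → ℝ) (c C : ℝ) (hc : 0 < c)
    (hm1 : Measurable f1) (hmb : Measurable fb)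
    (hf1 : ∀ᵐ θ ∂(volume.restrict (Icc (-π) π)), c ≤ f1 θ ∧ f1 θ ≤ C)
    (hfb : ∀ᵐ θ ∂(volume.restrict (Icc (-π) π)), c ≤ fb θ ∧ fb θ ≤ C) :
    MonotoneOn (fun τ => deltaAG f1 (fun θ => f1 θ ^ (1 - τ) * fb θ ^ τ))
      (Icc (0 : ℝ) 1) := by
  have : IsProbabilityMeasure (volume[|Icc (-π) π]) :=
    cond_isProbabilityMeasure_of_finite (by simp [Real.volume_Icc, pi_pos]) measure_Icc_lt_top.ne
  set u : ℝ → ℝ := fun θ ↦ log (f1 θ / fb θ)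
  have hu_meas : Measurable u := (hm1.div hmb).log
  have hu_bdd : ∀ᵐ θ ∂volume[|Icc (-π) π], |u θ| ≤ log C - log c :=
    Measure.ae_smul_measure ((hf1.and hfb).mono fun θ h ↦ abs_log_div_le hc h.1 h.2) _
  have hu_int : Integrable u volume[|Icc (-π) π] :=
    .of_bound hu_meas.aestronglyMeasurable _ (by simpa only [norm_eq_abs] using hu_bdd)
  have hexp := integrableExpSet_eq_univ_of_ae_abs_le hu_meas.aemeasurable hu_bdd
  refine ((monotoneOn_cgf_sub_mul_integral hu_int).mono ?_).congr fun τ _ ↦ ?_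
  · simpa [hexp] using Icc_subset_Ici_self
  · exact (deltaAG_eq_cgf_sub_mul_integral ((hf1.and hfb).mono fun θ h ↦
      ⟨hc.trans_le h.1.1, hc.trans_le h.2.1⟩) τ).symm
end

section
/- Let f1, f2 : [-π, π] → ℝ be measurable functions with 0 < c ≤ f_i(θ) ≤ C almost everywhere for some constants c, C (i = 1, 2). Then δ(f1, f2) ≥ 0, and δ(f1, f2) = 0 if and only if the ratio f1(θ)/f2(θ) is constant almost everywhere on [-π, π]. -/
open MeasureTheory Real Set

/-- The symmetrized distance `δ(f1, f2) := δ_{a/g}(f1, f2) + δ_{a/g}(f2, f1)`. -/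
noncomputable def deltaSym (f1 f2 : ℝ → ℝ) : ℝ :=
  deltaAG f1 f2 + deltaAG f2 f1

/-!
Both `δ_{a/g}(f1, f2)` and `δ_{a/g}(f2, f1)` are the Jensen gaps `log ⨍ g - ⨍ log g` of the
strictly concave function `log`, for `g = f1/f2` and `g = f2/f1`. The bounds `c ≤ fᵢ ≤ C` keep
both ratios in a compact interval `[c/C, C/c] ⊂ (0, ∞)`, so every integral involved is finite and
Jensen's inequality applies. Each gap is therefore nonnegative, and by strict concavity it
vanishes exactly when the ratio is a.e. constant; `f1/f2` is a.e. constant iff `f2/f1` is.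
-/

section Jensen

variable {α : Type*} [MeasurableSpace α] {μ : Measure α} [IsFiniteMeasure μ] {g : α → ℝ}
  {a b : ℝ}

lemma ae_eq_const_or_average_log_lt_log_average (ha : 0 < a) (hg : AEStronglyMeasurable g μ)
    (hgab : ∀ᵐ x ∂μ, g x ∈ Icc a b) :
    g =ᵐ[μ] Function.const α (⨍ x, g x ∂μ) ∨ ⨍ x, log (g x) ∂μ < log (⨍ x, g x ∂μ) := by
  have hpos : ∀ {x}, x ∈ Icc a b → 0 < x := fun hx => ha.trans_le hx.1
  have hgi : Integrable g μ := by
    refine .of_bound hg b ?_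
    filter_upwards [hgab] with x hx
    exact (norm_of_nonneg (hpos hx).le).trans_le hx.2
  have hlogi : Integrable (log ∘ g) μ := by
    refine .of_bound (measurable_log.comp_aemeasurable hg.aemeasurable).aestronglyMeasurable
      (max |log a| |log b|) ?_
    filter_upwards [hgab] with x hx
    exact abs_le_max_abs_abs (log_le_log ha hx.1) (log_le_log (hpos hx) hx.2)
  exact (strictConcaveOn_log_Ioi.subset (fun _ => hpos) (convex_Icc a b))
    |>.ae_eq_const_or_lt_map_average (continuousOn_log.mono fun x hx => (hpos hx).ne')
      isClosed_Icc hgab hgi hlogi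

variable [NeZero μ]

lemma average_log_eq_log_average_of_ae_eq_const {k : ℝ} (hk : ∀ᵐ x ∂μ, g x = k) :
    ⨍ x, log (g x) ∂μ = log (⨍ x, g x ∂μ) := by
  rw [average_congr (g := fun _ => log k) (hk.mono fun x hx => congrArg log hx),
    average_congr (g := fun _ => k) hk, average_const, average_const]

lemma average_log_le_log_average (ha : 0 < a) (hg : AEStronglyMeasurable g μ)
    (hgab : ∀ᵐ x ∂μ, g x ∈ Icc a b) : ⨍ x, log (g x) ∂μ ≤ log (⨍ x, g x ∂μ) := by
  rcases ae_eq_const_or_average_log_lt_log_average ha hg hgab with hconst | hlt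
  · exact (average_log_eq_log_average_of_ae_eq_const hconst).le
  · exact hlt.le

lemma average_log_eq_log_average_iff (ha : 0 < a) (hg : AEStronglyMeasurable g μ)
    (hgab : ∀ᵐ x ∂μ, g x ∈ Icc a b) :
    ⨍ x, log (g x) ∂μ = log (⨍ x, g x ∂μ) ↔ ∃ k : ℝ, ∀ᵐ x ∂μ, g x = k := by
  refine ⟨fun heq => ?_, fun ⟨k, hk⟩ => average_log_eq_log_average_of_ae_eq_const hk⟩
  rcases ae_eq_const_or_average_log_lt_log_average ha hg hgab with hconst | hlt
  · exact ⟨_, hconst⟩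
  · exact absurd heq hlt.ne

end Jensen

lemma div_mem_Icc_div_div {c C u v : ℝ} (hc : 0 < c) (hu : u ∈ Icc c C) (hv : v ∈ Icc c C) :
    u / v ∈ Icc (c / C) (C / c) :=
  ⟨div_le_div₀ (hc.le.trans hu.1) hu.1 (hc.trans_le hv.1) hv.2,
    div_le_div₀ (hc.le.trans (hu.1.trans hu.2)) hu.2 hc hv.1⟩

section DeltaAG

instance : NeZero (volume.restrict (Icc (-π) π)) :=
  ⟨by rw [Ne, Measure.restrict_eq_zero, Real.volume_Icc]; simp [pi_pos]⟩

lemma inv_two_pi_mul_integral_eq_setAverage (f : ℝ → ℝ) :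
    (2 * π)⁻¹ * ∫ θ in Icc (-π) π, f θ = ⨍ θ in Icc (-π) π, f θ := by
  rw [setAverage_eq, Real.volume_real_Icc, smul_eq_mul, max_eq_left (by linarith [pi_pos])]
  ring_nf

lemma deltaAG_eq_log_average_sub_average_log (f1 f2 : ℝ → ℝ) :
    deltaAG f1 f2 = log (⨍ θ in Icc (-π) π, f1 θ / f2 θ) -
      ⨍ θ in Icc (-π) π, log (f1 θ / f2 θ) := by
  simp only [deltaAG, inv_two_pi_mul_integral_eq_setAverage]

variable {f1 f2 : ℝ → ℝ} {a b : ℝ}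

lemma deltaAG_nonneg (ha : 0 < a)
    (hm : AEStronglyMeasurable (fun θ => f1 θ / f2 θ) (volume.restrict (Icc (-π) π)))
    (hab : ∀ᵐ θ ∂(volume.restrict (Icc (-π) π)), f1 θ / f2 θ ∈ Icc a b) :
    0 ≤ deltaAG f1 f2 := by
  rw [deltaAG_eq_log_average_sub_average_log, sub_nonneg]
  exact average_log_le_log_average ha hm hab

lemma deltaAG_eq_zero_iff (ha : 0 < a)
    (hm : AEStronglyMeasurable (fun θ => f1 θ / f2 θ) (volume.restrict (Icc (-π) π)))
    (hab : ∀ᵐ θ ∂(volume.restrict (Icc (-π) π)), f1 θ / f2 θ ∈ Icc a b) :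
    deltaAG f1 f2 = 0 ↔ ∃ k : ℝ, ∀ᵐ θ ∂(volume.restrict (Icc (-π) π)), f1 θ / f2 θ = k := by
  rw [deltaAG_eq_log_average_sub_average_log, sub_eq_zero, eq_comm]
  exact average_log_eq_log_average_iff ha hm hab

end DeltaAG

/-- `δ(f1, f2) ≥ 0`, with equality iff `f1/f2` is constant a.e. on `[-π, π]`. -/
theorem deltaSym_nonneg_and_eq_zero_iff (f1 f2 : ℝ → ℝ) (c C : ℝ) (hc : 0 < c)
    (hm1 : Measurable f1) (hm2 : Measurable f2)
    (hf1 : ∀ᵐ θ ∂(volume.restrict (Icc (-π) π)), c ≤ f1 θ ∧ f1 θ ≤ C)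
    (hf2 : ∀ᵐ θ ∂(volume.restrict (Icc (-π) π)), c ≤ f2 θ ∧ f2 θ ≤ C) :
    0 ≤ deltaSym f1 f2 ∧
      (deltaSym f1 f2 = 0 ↔
        ∃ k : ℝ, ∀ᵐ θ ∂(volume.restrict (Icc (-π) π)), f1 θ / f2 θ = k) := by
  obtain ⟨θ₀, hcθ₀, hθ₀C⟩ := hf1.exists
  have ha : 0 < c / C := div_pos hc (hc.trans_le (hcθ₀.trans hθ₀C))
  have hratio : ∀ {u v : ℝ → ℝ}, Measurable u → Measurable v →
      (∀ᵐ θ ∂(volume.restrict (Icc (-π) π)), c ≤ u θ ∧ u θ ≤ C) →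
      (∀ᵐ θ ∂(volume.restrict (Icc (-π) π)), c ≤ v θ ∧ v θ ≤ C) →
      0 ≤ deltaAG u v ∧ (deltaAG u v = 0 ↔
        ∃ k : ℝ, ∀ᵐ θ ∂(volume.restrict (Icc (-π) π)), u θ / v θ = k) := by
    intro u v hu hv hub hvb
    have hab : ∀ᵐ θ ∂(volume.restrict (Icc (-π) π)), u θ / v θ ∈ Icc (c / C) (C / c) := by
      filter_upwards [hub, hvb] with θ hθu hθv
      exact div_mem_Icc_div_div hc hθu hθv
    exact ⟨deltaAG_nonneg ha (hu.div hv).aestronglyMeasurable hab,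
      deltaAG_eq_zero_iff ha (hu.div hv).aestronglyMeasurable hab⟩
  obtain ⟨h12, h12_iff⟩ := hratio hm1 hm2 hf1 hf2
  obtain ⟨h21, h21_iff⟩ := hratio hm2 hm1 hf2 hf1
  refine ⟨add_nonneg h12 h21, ?_⟩
  rw [deltaSym, add_eq_zero_iff_of_nonneg h12 h21, h12_iff, h21_iff]
  refine ⟨And.left, fun ⟨k, hk⟩ => ⟨⟨k, hk⟩, k⁻¹, ?_⟩⟩
  filter_upwards [hk] with θ hθ
  rw [← inv_div, hθ]
end

section
/- Let f1, fb : [-π, π] → ℝ be measurable functions with 0 < c ≤ f1(θ), fb(θ) ≤ C almost everywhere for some constants c, C. Then the function τ ↦ δ(f1, f1^{1−τ} fb^{τ}) is monotonically increasing for τ ∈ [0, 1]. -/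
/-! Write `X = log f1 - log fb` and let `ν` be normalized Lebesgue measure on `[-π, π]`.
Along the logarithmic interval `f1 / f_τ = exp (τ X)` and `f_τ / f1 = exp (-τ X)`, so the
geometric-mean terms cancel and `δ(f1, f_τ) = K(τ) + K(-τ)` with `K` the cumulant generating
function of `X` under `ν`. Hölder's inequality makes `K` convex, and it is finite everywhere
because `X` is bounded. An even convex function on `ℝ` is nondecreasing on `[0, ∞)`. -/

open MeasureTheory Real Set

open ProbabilityTheory

namespace MeasureTheory

theorem integral_rpow_mul_rpow_le {α : Type*} [MeasurableSpace α] {μ : Measure α} {f g : α → ℝ}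
    (hf₀ : 0 ≤ᵐ[μ] f) (hg₀ : 0 ≤ᵐ[μ] g) (hf : Integrable f μ)
    (hg : Integrable g μ) {a b : ℝ} (ha : 0 < a) (hb : 0 < b) (hab : a + b = 1) :
    ∫ x, f x ^ a * g x ^ b ∂μ ≤ (∫ x, f x ∂μ) ^ a * (∫ x, g x ∂μ) ^ b := by
  have memLp {u : α → ℝ} (hu₀ : 0 ≤ᵐ[μ] u) (hu : Integrable u μ) {c : ℝ} (hc : 0 < c) :
      MemLp (fun x ↦ u x ^ c) (ENNReal.ofReal (1 / c)) μ := by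
    refine (integrable_norm_rpow_iff (hu.1.aemeasurable.pow_const c).aestronglyMeasurable
      (by simpa using hc) ENNReal.ofReal_ne_top).1 (hu.congr ?_)
    filter_upwards [hu₀] with x hx
    rw [ENNReal.toReal_ofReal (one_div_pos.2 hc).le, norm_of_nonneg (rpow_nonneg hx c),
      ← rpow_mul hx, mul_one_div_cancel hc.ne', rpow_one]
  have rpow_one_div {u : α → ℝ} (hu₀ : 0 ≤ᵐ[μ] u) {c : ℝ} (hc : 0 < c) :
      ∫ x, (u x ^ c) ^ (1 / c) ∂μ = ∫ x, u x ∂μ := by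
    refine integral_congr_ae ?_
    filter_upwards [hu₀] with x hx
    rw [← rpow_mul hx, mul_one_div_cancel hc.ne', rpow_one]
  have h := integral_mul_le_Lp_mul_Lq_of_nonneg (holderConjugate_one_div ha hb hab)
    (hf₀.mono fun x hx ↦ rpow_nonneg hx a) (hg₀.mono fun x hx ↦ rpow_nonneg hx b)
    (memLp hf₀ hf ha) (memLp hg₀ hg hb)
  rwa [rpow_one_div hf₀ ha, rpow_one_div hg₀ hb, one_div_one_div, one_div_one_div] at h

end MeasureTheory

theorem ConvexOn.monotoneOn_Ici_of_even {f : ℝ → ℝ} (hf : ConvexOn ℝ univ f)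
    (heven : Function.Even f) : MonotoneOn f (Ici 0) := by
  intro a ha b _ hab
  have hseg : a ∈ segment ℝ (-b) b := by
    rw [segment_eq_Icc (by linarith [mem_Ici.1 ha])]
    exact ⟨by linarith [mem_Ici.1 ha], hab⟩
  simpa [heven b] using hf.le_on_segment (mem_univ _) (mem_univ _) hseg

namespace ProbabilityTheory

variable {Ω : Type*} [MeasurableSpace Ω] {X : Ω → ℝ} {μ : Measure Ω}

theorem mgf_mul_add_mul_le {s t a b : ℝ} (hs : s ∈ integrableExpSet X μ)
    (ht : t ∈ integrableExpSet X μ) (ha : 0 < a) (hb : 0 < b) (hab : a + b = 1) :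
    mgf X μ (a * s + b * t) ≤ mgf X μ s ^ a * mgf X μ t ^ b := by
  have hexp (ω : Ω) : exp ((a * s + b * t) * X ω) = exp (s * X ω) ^ a * exp (t * X ω) ^ b := by
    rw [← exp_mul, ← exp_mul, ← exp_add]
    ring_nf
  simp only [mgf, hexp]
  exact integral_rpow_mul_rpow_le (ae_of_all _ fun _ ↦ (exp_pos _).le)
    (ae_of_all _ fun _ ↦ (exp_pos _).le) hs ht ha hb hab

theorem convexOn_cgf : ConvexOn ℝ (integrableExpSet X μ) (cgf X μ) := by
  rcases eq_zero_or_neZero μ with rfl | hμ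
  · exact cgf_zero_measure (X := X) ▸ convexOn_const 0 convex_integrableExpSet
  refine convexOn_iff_forall_pos.2 ⟨convex_integrableExpSet, fun s hs t ht a b ha hb hab ↦ ?_⟩
  have hst := convex_integrableExpSet hs ht ha.le hb.le hab
  simp only [smul_eq_mul, cgf] at hst ⊢
  rw [← log_rpow (mgf_pos' hμ.out hs), ← log_rpow (mgf_pos' hμ.out ht),
    ← log_mul (by positivity [mgf_pos' hμ.out hs]) (by positivity [mgf_pos' hμ.out ht])]
  exact log_le_log (mgf_pos' hμ.out hst) (mgf_mul_add_mul_le hs ht ha hb hab)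

theorem integrableExpSet_eq_univ_of_abs_le [IsFiniteMeasure μ] (hX : AEMeasurable X μ) {K : ℝ}
    (hK : ∀ᵐ ω ∂μ, |X ω| ≤ K) : integrableExpSet X μ = univ := by
  refine eq_univ_of_forall fun t ↦ Integrable.of_bound (by fun_prop) (exp (|t| * K)) ?_
  filter_upwards [hK] with ω hω
  rw [norm_of_nonneg (exp_pos _).le, exp_le_exp]
  calc t * X ω ≤ |t| * |X ω| := (le_abs_self _).trans (abs_mul _ _).le
    _ ≤ |t| * K := by gcongr

theorem monotoneOn_cgf_add_cgf_neg (hX : integrableExpSet X μ = univ) :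
    MonotoneOn (fun t ↦ cgf X μ t + cgf X μ (-t)) (Ici 0) := by
  have hconv : ConvexOn ℝ univ (cgf X μ) := hX ▸ convexOn_cgf
  refine ConvexOn.monotoneOn_Ici_of_even ?_ fun t ↦ by simp only [neg_neg, add_comm]
  exact hconv.add (hconv.comp_linearMap (-LinearMap.id))

end ProbabilityTheory

theorem integral_cond_Icc_neg_pi_pi (f : ℝ → ℝ) :
    ∫ θ, f θ ∂volume[|Icc (-π) π] = (2 * π)⁻¹ * ∫ θ in Icc (-π) π, f θ := by
  rw [ProbabilityTheory.cond, integral_smul_measure, Real.volume_Icc, ENNReal.toReal_inv,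
    ENNReal.toReal_ofReal (by linarith [pi_pos]), smul_eq_mul]
  ring_nf

theorem div_rpow_one_sub_mul_rpow_eq_exp {x y : ℝ} (hx : 0 < x) (hy : 0 < y) (τ : ℝ) :
    x / (x ^ (1 - τ) * y ^ τ) = exp (τ * (log x - log y)) := by
  nth_rw 1 [← exp_log hx]
  rw [rpow_def_of_pos hx, rpow_def_of_pos hy, ← exp_add, ← exp_sub]
  ring_nf

theorem deltaAG_eq_cgf_sub {f1 f2 X : ℝ → ℝ} {τ : ℝ}
    (h : ∀ᵐ θ ∂volume.restrict (Icc (-π) π), f1 θ / f2 θ = exp (τ * X θ)) :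
    deltaAG f1 f2 = cgf X volume[|Icc (-π) π] τ - τ * ∫ θ, X θ ∂volume[|Icc (-π) π] := by
  have hlog : ∀ᵐ θ ∂volume.restrict (Icc (-π) π), log (f1 θ / f2 θ) = τ * X θ :=
    h.mono fun θ hθ ↦ by rw [hθ, log_exp]
  rw [deltaAG, integral_congr_ae h, integral_congr_ae hlog, cgf, mgf,
    integral_cond_Icc_neg_pi_pi, integral_cond_Icc_neg_pi_pi, integral_const_mul]
  ring

theorem deltaSym_logInterval_eq_cgf_add_cgf_neg {f1 fb : ℝ → ℝ}
    (hf1 : ∀ᵐ θ ∂volume.restrict (Icc (-π) π), 0 < f1 θ)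
    (hfb : ∀ᵐ θ ∂volume.restrict (Icc (-π) π), 0 < fb θ) (τ : ℝ) :
    deltaSym f1 (fun θ ↦ f1 θ ^ (1 - τ) * fb θ ^ τ) =
      cgf (fun θ ↦ log (f1 θ) - log (fb θ)) volume[|Icc (-π) π] τ +
        cgf (fun θ ↦ log (f1 θ) - log (fb θ)) volume[|Icc (-π) π] (-τ) := by
  rw [deltaSym, deltaAG_eq_cgf_sub (τ := τ), deltaAG_eq_cgf_sub (τ := -τ)]
  · ring
  · filter_upwards [hf1, hfb] with θ h1 hb
    rw [← inv_div, div_rpow_one_sub_mul_rpow_eq_exp h1 hb, ← exp_neg, neg_mul]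
  · filter_upwards [hf1, hfb] with θ h1 hb
    exact div_rpow_one_sub_mul_rpow_eq_exp h1 hb τ

/-- `τ ↦ δ(f1, f1^{1-τ} fb^{τ})` is monotonically increasing on `[0, 1]`. -/
theorem deltaSym_monotoneOn (f1 fb : ℝ → ℝ) (c C : ℝ) (hc : 0 < c)
    (hm1 : Measurable f1) (hmb : Measurable fb)
    (hf1 : ∀ᵐ θ ∂(volume.restrict (Icc (-π) π)), c ≤ f1 θ ∧ f1 θ ≤ C)
    (hfb : ∀ᵐ θ ∂(volume.restrict (Icc (-π) π)), c ≤ fb θ ∧ fb θ ≤ C) :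
    MonotoneOn (fun τ => deltaSym f1 (fun θ => f1 θ ^ (1 - τ) * fb θ ^ τ))
      (Icc (0 : ℝ) 1) := by
  have hlog_bound : ∀ᵐ θ ∂volume[|Icc (-π) π], |log (f1 θ) - log (fb θ)| ≤ log C - log c := by
    refine Measure.ae_smul_measure ?_ _
    filter_upwards [hf1, hfb] with θ h1 hb
    exact abs_sub_le_iff.2
      ⟨by linarith [log_le_log hc hb.1, log_le_log (hc.trans_le h1.1) h1.2],
        by linarith [log_le_log hc h1.1, log_le_log (hc.trans_le hb.1) hb.2]⟩
  have hfinite := integrableExpSet_eq_univ_of_abs_le (by fun_prop) hlog_bound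
  simp_rw [deltaSym_logInterval_eq_cgf_add_cgf_neg (hf1.mono fun θ h ↦ hc.trans_le h.1)
    (hfb.mono fun θ h ↦ hc.trans_le h.1)]
  exact (monotoneOn_cgf_add_cgf_neg hfinite).mono Icc_subset_Ici_self
end

section
/- Let f, Δ : [-π, π] → ℝ be measurable with 0 < c ≤ f(θ) ≤ C and |Δ(θ)| ≤ C almost everywhere for some constants c, C. Set Q := (1/2π)∫_{-π}^{π} (Δ(θ)/f(θ))² dθ − ((1/2π)∫_{-π}^{π} Δ(θ)/f(θ) dθ)². Then there exist constants K > 0 and t0 > 0 such that for all real t with |t| ≤ t0 one has |δ(f, f + tΔ) − t²·Q| ≤ K·|t|³; that is, δ(f, f + tΔ) = t²·Q + O(|t|³) as t → 0. -/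
open MeasureTheory Real Set

/-! The logarithmic parts of `δ_{a/g}(f, f + tΔ)` and `δ_{a/g}(f + tΔ, f)` cancel, so with
`h = tΔ/f` and `ν` the normalized Lebesgue measure on `[-π, π]`,
`δ(f, f + tΔ) = log ∫ (1 + h)⁻¹ dν + log ∫ (1 + h) dν`. Since `(1 + h)⁻¹ = 1 - h + h² + O(h³)`,
the product of the two means is `1 + (∫ h² dν - (∫ h dν)²) + O(|t|³)`, and
`log (1 + u) = u + O(u²)` gives the claim. -/

open ProbabilityTheory

theorem abs_log_one_add_sub_le {u : ℝ} (hu : |u| ≤ 1 / 2) :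
    |log (1 + u) - u| ≤ 2 * u ^ 2 := by
  have h := abs_log_sub_add_sum_range_le (x := -u) (by rw [abs_neg]; linarith) 1
  simp only [Finset.sum_range_one, zero_add, pow_one, Nat.cast_zero, div_one, sub_neg_eq_add,
    abs_neg, add_comm (-u)] at h
  calc |log (1 + u) - u| = |log (1 + u) + -u| := by rw [sub_eq_add_neg]
    _ ≤ |u| ^ 2 / (1 - |u|) := h
    _ ≤ 2 * u ^ 2 := by
      rw [div_le_iff₀ (by linarith), sq_abs]
      nlinarith [sq_nonneg u]

theorem abs_inv_one_add_sub_le {x : ℝ} (hx : |x| ≤ 1 / 2) :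
    |(1 + x)⁻¹ - (1 - x + x ^ 2)| ≤ 2 * |x| ^ 3 := by
  have hpos : 1 / 2 ≤ 1 + x := by linarith [neg_abs_le x]
  have hid : (1 + x)⁻¹ - (1 - x + x ^ 2) = -x ^ 3 / (1 + x) := by
    field_simp
    ring
  rw [hid, abs_div, abs_neg, abs_pow, abs_of_pos (show (0 : ℝ) < 1 + x by linarith),
    div_le_iff₀ (by linarith)]
  nlinarith [pow_nonneg (abs_nonneg x) 3]

theorem abs_log_add_log_one_add_sub_le {A a b ε : ℝ} (hε : ε ≤ 1 / 4) (ha : |a| ≤ ε)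
    (hb : |b| ≤ ε ^ 2) (hA : |A - (1 - a + b)| ≤ 2 * ε ^ 3) :
    |log A + log (1 + a) - (b - a ^ 2)| ≤ 16 * ε ^ 3 := by
  have hε0 : 0 ≤ ε := (abs_nonneg a).trans ha
  set u := A * (1 + a) - 1
  have hu_sub : |u - (b - a ^ 2)| ≤ 4 * ε ^ 3 := by
    have hid : u - (b - a ^ 2) = a * b + (A - (1 - a + b)) * (1 + a) := by ring
    have hab : |a * b| ≤ ε ^ 3 := by
      rw [abs_mul, pow_succ']; exact mul_le_mul ha hb (abs_nonneg _) hε0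
    have h1a : |1 + a| ≤ 3 / 2 := (abs_add_le _ _).trans (by rw [abs_one]; linarith)
    have hrest : |(A - (1 - a + b)) * (1 + a)| ≤ 2 * ε ^ 3 * (3 / 2) := by
      rw [abs_mul]; exact mul_le_mul hA h1a (abs_nonneg _) (by positivity)
    rw [hid]
    linarith [abs_add_le (a * b) ((A - (1 - a + b)) * (1 + a))]
  have hu_le : |u| ≤ 3 * ε ^ 2 := by
    have : |b - a ^ 2| ≤ 2 * ε ^ 2 := by
      have : |a ^ 2| ≤ ε ^ 2 := by rw [abs_pow]; exact pow_le_pow_left₀ (abs_nonneg a) ha 2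
      linarith [abs_sub b (a ^ 2)]
    have : 4 * ε ^ 3 ≤ ε ^ 2 := by nlinarith [sq_nonneg ε]
    linarith [abs_sub_abs_le_abs_sub u (b - a ^ 2)]
  have hu_half : |u| ≤ 1 / 2 := by nlinarith
  have hA0 : 0 < A := by nlinarith [abs_le.1 hA, abs_le.1 ha, abs_le.1 hb]
  have ha0 : 0 < 1 + a := by linarith [neg_abs_le a]
  rw [← log_mul hA0.ne' ha0.ne', show A * (1 + a) = 1 + u by ring]
  have hlog := abs_log_one_add_sub_le hu_half
  have hsq : 2 * u ^ 2 ≤ 12 * ε ^ 3 := by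
    rw [← sq_abs]; nlinarith [abs_nonneg u]
  calc |log (1 + u) - (b - a ^ 2)| ≤ |log (1 + u) - u| + |u - (b - a ^ 2)| := abs_sub_le _ _ _
    _ ≤ 16 * ε ^ 3 := by linarith

section ProbabilityMeasure

variable {α : Type*} [MeasurableSpace α] {ν : Measure α} [IsProbabilityMeasure ν] {h : α → ℝ}
  {ε : ℝ}

theorem abs_integral_inv_one_add_sub_le (hh : AEStronglyMeasurable h ν) (hε : ε ≤ 1 / 2)
    (hhε : ∀ᵐ x ∂ν, |h x| ≤ ε) :
    |∫ x, (1 + h x)⁻¹ ∂ν - (1 - ∫ x, h x ∂ν + ∫ x, h x ^ 2 ∂ν)| ≤ 2 * ε ^ 3 := by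
  have hint : Integrable h ν := .of_bound hh ε hhε
  have hint2 : Integrable (fun x => h x ^ 2) ν :=
    .of_bound (hh.pow 2) (ε ^ 2) <| hhε.mono fun x hx => by
      rw [norm_pow, Real.norm_eq_abs]; exact pow_le_pow_left₀ (abs_nonneg _) hx 2
  have hint_inv : Integrable (fun x => (1 + h x)⁻¹) ν :=
    .of_bound (by fun_prop) 2 <| hhε.mono fun x hx => by
      have : 1 / 2 ≤ 1 + h x := by linarith [neg_abs_le (h x)]
      rw [Real.norm_eq_abs, abs_inv, abs_of_pos (by linarith)]
      exact inv_le_of_inv_le₀ (by norm_num) (by linarith)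
  have hpoly : ∫ x, (1 - h x + h x ^ 2) ∂ν = 1 - ∫ x, h x ∂ν + ∫ x, h x ^ 2 ∂ν := by
    rw [integral_add (f := fun x => 1 - h x) ((integrable_const 1).sub hint) hint2,
      integral_sub (integrable_const 1) hint]
    simp
  rw [← hpoly, ← integral_sub hint_inv
    (g := fun x => 1 - h x + h x ^ 2) (((integrable_const 1).sub hint).add hint2)]
  have hbound : ∀ᵐ x ∂ν, ‖(1 + h x)⁻¹ - (1 - h x + h x ^ 2)‖ ≤ 2 * ε ^ 3 :=
    hhε.mono fun x hx => (abs_inv_one_add_sub_le (hx.trans hε)).trans <| by gcongr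
  simpa using norm_integral_le_of_norm_le_const hbound

theorem abs_log_integral_inv_one_add_add_log_integral_one_add_sub_le
    (hh : AEStronglyMeasurable h ν) (hε : ε ≤ 1 / 4) (hhε : ∀ᵐ x ∂ν, |h x| ≤ ε) :
    |log (∫ x, (1 + h x)⁻¹ ∂ν) + log (∫ x, (1 + h x) ∂ν) -
        (∫ x, h x ^ 2 ∂ν - (∫ x, h x ∂ν) ^ 2)| ≤ 16 * ε ^ 3 := by
  have hint : Integrable h ν := .of_bound hh ε hhε
  have hmean : |∫ x, h x ∂ν| ≤ ε := by
    simpa using norm_integral_le_of_norm_le_const (μ := ν) (f := h) (by simpa using hhε)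
  have hmean2 : |∫ x, h x ^ 2 ∂ν| ≤ ε ^ 2 := by
    simpa using norm_integral_le_of_norm_le_const (μ := ν) (f := fun x => h x ^ 2) <|
      hhε.mono fun x hx => by
        rw [norm_pow, Real.norm_eq_abs]; exact pow_le_pow_left₀ (abs_nonneg _) hx 2
  rw [integral_add (integrable_const 1) hint, integral_const]
  simp only [probReal_univ, one_smul]
  exact abs_log_add_log_one_add_sub_le hε hmean hmean2
    (abs_integral_inv_one_add_sub_le hh (by linarith) hhε)

end ProbabilityMeasure

theorem inv_two_pi_mul_setIntegral_Icc_eq_integral_cond (F : ℝ → ℝ) :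
    (2 * π)⁻¹ * ∫ θ in Icc (-π) π, F θ = ∫ θ, F θ ∂volume[|Icc (-π) π] := by
  rw [ProbabilityTheory.cond, ← setAverage_eq', setAverage_eq,
    volume_real_Icc_of_le (by linarith [pi_pos]), smul_eq_mul]
  ring_nf

instance : IsProbabilityMeasure volume[|Icc (-π) π] :=
  cond_isProbabilityMeasure_of_finite (by simp [pi_pos]) (by simp)

theorem deltaSym_eq_log_add_log (f1 f2 : ℝ → ℝ) :
    deltaSym f1 f2 =
      log ((2 * π)⁻¹ * ∫ θ in Icc (-π) π, f1 θ / f2 θ) +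
        log ((2 * π)⁻¹ * ∫ θ in Icc (-π) π, f2 θ / f1 θ) := by
  simp only [deltaSym, deltaAG, ← inv_div (f1 _), log_inv, integral_neg]
  ring

/-- Second-order expansion of the symmetrized distance:
`δ(f, f + tΔ) = t²·Q + O(|t|³)` as `t → 0`, where
`Q = (1/2π)∫ (Δ/f)² dθ − ((1/2π)∫ Δ/f dθ)²`. -/
theorem deltaSym_quadratic_expansion (f Δ : ℝ → ℝ) (c C : ℝ) (hc : 0 < c)
    (hmf : Measurable f) (hmΔ : Measurable Δ)
    (hf : ∀ᵐ θ ∂(volume.restrict (Icc (-π) π)), c ≤ f θ ∧ f θ ≤ C)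
    (hΔ : ∀ᵐ θ ∂(volume.restrict (Icc (-π) π)), |Δ θ| ≤ C) :
    ∃ K > (0 : ℝ), ∃ t0 > (0 : ℝ), ∀ t : ℝ, |t| ≤ t0 →
      |deltaSym f (fun θ => f θ + t * Δ θ) -
          t ^ 2 * (((2 * π)⁻¹ * ∫ θ in Icc (-π) π, (Δ θ / f θ) ^ 2) -
            ((2 * π)⁻¹ * ∫ θ in Icc (-π) π, Δ θ / f θ) ^ 2)| ≤ K * |t| ^ 3 := by
  set ν := volume[|Icc (-π) π]
  set M := max (C / c) 1
  have hf_pos : ∀ᵐ θ ∂ν, 0 < f θ :=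
    Measure.ae_smul_measure (hf.mono fun θ hθ => hc.trans_le hθ.1) _
  have hg : ∀ᵐ θ ∂ν, |Δ θ / f θ| ≤ M := by
    refine Measure.ae_smul_measure ((hf.and hΔ).mono fun θ ⟨⟨hcf, _⟩, hΔC⟩ => ?_) _
    rw [abs_div, abs_of_pos (hc.trans_le hcf)]
    exact (div_le_div₀ ((abs_nonneg _).trans hΔC) hΔC hc hcf).trans (le_max_left _ _)
  refine ⟨16 * M ^ 3, by positivity, (4 * M)⁻¹, by positivity, fun t ht => ?_⟩
  have hratio : ∀ᵐ θ ∂ν, f θ / (f θ + t * Δ θ) = (1 + t * (Δ θ / f θ))⁻¹ ∧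
      (f θ + t * Δ θ) / f θ = 1 + t * (Δ θ / f θ) := hf_pos.mono fun θ hθ => by
    constructor <;> field_simp
  have hδ : deltaSym f (fun θ => f θ + t * Δ θ) =
      log (∫ θ, (1 + t * (Δ θ / f θ))⁻¹ ∂ν) + log (∫ θ, (1 + t * (Δ θ / f θ)) ∂ν) := by
    rw [deltaSym_eq_log_add_log, inv_two_pi_mul_setIntegral_Icc_eq_integral_cond,
      inv_two_pi_mul_setIntegral_Icc_eq_integral_cond,
      integral_congr_ae (hratio.mono fun _ h => h.1),
      integral_congr_ae (hratio.mono fun _ h => h.2)]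
  have hQ : t ^ 2 * (((2 * π)⁻¹ * ∫ θ in Icc (-π) π, (Δ θ / f θ) ^ 2) -
      ((2 * π)⁻¹ * ∫ θ in Icc (-π) π, Δ θ / f θ) ^ 2) =
        ∫ θ, (t * (Δ θ / f θ)) ^ 2 ∂ν - (∫ θ, t * (Δ θ / f θ) ∂ν) ^ 2 := by
    simp only [inv_two_pi_mul_setIntegral_Icc_eq_integral_cond, mul_pow, integral_const_mul]
    ring
  have htM : |t| * M ≤ 1 / 4 := by
    have hM : 0 < M := one_pos.trans_le (le_max_right _ _)
    calc |t| * M ≤ (4 * M)⁻¹ * M := by gcongr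
      _ = 1 / 4 := by field_simp
  rw [hδ, hQ, show 16 * M ^ 3 * |t| ^ 3 = 16 * (|t| * M) ^ 3 by ring]
  exact abs_log_integral_inv_one_add_add_log_integral_one_add_sub_le
    ((hmΔ.div hmf).const_mul t).aestronglyMeasurable htM
    (hg.mono fun θ hθ => by rw [abs_mul]; gcongr)
end
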